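/- With 𝔤_− and 𝔤₀ as in the presymplectic prolongation setup (ω ≠ 0), the k-th Tanaka prolongation 𝔤_k vanishes for all k ≥ 3. -/

import Mathlib

/-!
On `𝔤₋₂ = Sym² U` the `𝔰𝔭_ω(Q)`-component of the prolongation identity says that every value
`x` of `φ₂` satisfies `ω(x, p) q + ω(q, p) x = 0`. Taking `q = p ≠ 0` gives `ω(x, p) = 0`,
so `ω(q, p) x = 0` for all `q, p`, and `x = 0` because `ω ≠ 0`. With `φ₂ = 0`, the
`𝔤𝔩(U)`-component on the diagonal `w = w'` reads `φ₁(u ⊗ q)(t, w) w = 0`, so `φ₁ = 0`.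
For `𝔤₄`, the bracket of `ψ` with `𝔤₋₁` is `u ↦ ψ(s)(t, u) p`, which vanishes for some
`p ≠ 0` only if `ψ = 0`.
-/
open scoped TensorProduct

noncomputable section

variable (U : Type*) [AddCommGroup U] [Module ℂ U]
variable (Q : Type*) [AddCommGroup Q] [Module ℂ Q]

/-- Relations defining `Sym² U` as a quotient of `U ⊗ U`. -/
def symRel : Submodule ℂ (U ⊗[ℂ] U) :=
  Submodule.span ℂ {x | ∃ u v : U, x = u ⊗ₜ[ℂ] v - v ⊗ₜ[ℂ] u}

/-- The symmetric square `Sym² U`. -/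
def SymSq := (U ⊗[ℂ] U) ⧸ symRel U

instance : AddCommGroup (SymSq U) := by unfold SymSq; infer_instance
instance : Module ℂ (SymSq U) := by unfold SymSq; infer_instance

/-- The symmetric product `u ⊙ v ∈ Sym² U`. -/
def symPr (u v : U) : SymSq U := Submodule.Quotient.mk (u ⊗ₜ[ℂ] v)

section SymSq

variable {U} {W : Type*} [AddCommGroup W] [Module ℂ W]

theorem SymSq.hom_ext {f g : SymSq U →ₗ[ℂ] W}
    (h : ∀ u v : U, f (symPr U u v) = g (symPr U u v)) : f = g :=
  Submodule.linearMap_qext (symRel U) (TensorProduct.ext' h)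

end SymSq

section Field

variable {K V : Type*} [Field K] [AddCommGroup V] [Module K V]

theorem mul_smul_add_mul_smul_eq_zero_iff {c a b : K} (hc : c ≠ 0) {x y : V} :
    (c * a) • x + (c * b) • y = 0 ↔ a • x + b • y = 0 := by
  rw [mul_smul, mul_smul, ← smul_add, smul_eq_zero, or_iff_right hc]

theorem LinearMap.eq_zero_of_forall_smul_add_smul_eq_zero [NeZero (2 : K)] {f : V →ₗ[K] K}
    (hf : ∀ w w' : V, f w • w' + f w' • w = 0) : f = 0 := by
  ext w
  have h2 : (2 : K) • f w • w = 0 := by rw [two_smul]; exact hf w w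
  rcases smul_eq_zero.1 ((smul_eq_zero.1 h2).resolve_left two_ne_zero) with h | rfl
  · exact h
  · simp

theorem LinearMap.IsAlt.eq_zero_of_forall_smul_add_smul_eq_zero {ω : V →ₗ[K] V →ₗ[K] K}
    (halt : ω.IsAlt) (hne : ω ≠ 0) {x : V}
    (hx : ∀ q p : V, ω x p • q + ω q p • x = 0) : x = 0 := by
  obtain ⟨q₀, hq₀⟩ := DFunLike.ne_iff.1 hne
  obtain ⟨p₀, hp₀⟩ := DFunLike.ne_iff.1 hq₀
  have hωq₀p₀ : ω q₀ p₀ ≠ 0 := hp₀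
  have hp₀_ne : p₀ ≠ 0 := fun h => hωq₀p₀ (by simp [h])
  have hωxp₀ : ω x p₀ = 0 := by
    simpa [halt p₀, hp₀_ne] using hx p₀ p₀
  simpa [hωxp₀, hωq₀p₀] using hx q₀ p₀

end Field

/- `𝔤₁ ≅ Hom(U, Q)` acts by `h · (v ⊙ w) = ½ (w ⊗ h v + v ⊗ h w)`, and `𝔤₂ ≅ Sym² U*` by
`B · (v ⊙ w) = (u ↦ ½ B(u, v) w + ½ B(u, w) v) ∈ 𝔤𝔩(U)`, `B · (w ⊗ p) = (u ↦ B(u, w) p) ∈ 𝔤₁`.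
An element of `𝔤₃` is a pair `(φ₂ : 𝔤₋₂ → 𝔤₁, φ₁ : 𝔤₋₁ → 𝔤₂)`. Once `𝔤₃ = 0`, an element of
`𝔤₄` is a map `ψ : 𝔤₋₂ → 𝔤₂` whose brackets with `𝔤₋₁` vanish, and `𝔤_k = 0` for `k ≥ 5`
follows from `𝔤₃ = 𝔤₄ = 0`. -/
theorem higher_prolongations_vanish
    (ω : Q →ₗ[ℂ] Q →ₗ[ℂ] ℂ) (halt : ∀ q : Q, ω q q = 0) (hne : ω ≠ 0)
    (B : (U ⊗[ℂ] Q) →ₗ[ℂ] (U ⊗[ℂ] Q) →ₗ[ℂ] SymSq U) :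
    -- 𝔤₃ = 0 :
    (∀ (φ₂ : SymSq U →ₗ[ℂ] (U →ₗ[ℂ] Q))
        (φ₁ : (U ⊗[ℂ] Q) →ₗ[ℂ] (U →ₗ[ℂ] U →ₗ[ℂ] ℂ)),
      -- φ₁ takes values in symmetric bilinear forms (𝔤₂ = Sym²U*),
      (∀ (x : U ⊗[ℂ] Q) (u v : U), φ₁ x u v = φ₁ x v u) →
      -- prolongation identity on pairs from 𝔤₋₁ × 𝔤₋₁,
      (∀ (w₁ : U) (q₁ : Q) (w₂ : U) (q₂ : Q) (u : U),
        φ₂ (B (w₁ ⊗ₜ[ℂ] q₁) (w₂ ⊗ₜ[ℂ] q₂)) u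
          = (φ₁ (w₁ ⊗ₜ[ℂ] q₁) u w₂) • q₂ - (φ₁ (w₂ ⊗ₜ[ℂ] q₂) u w₁) • q₁) →
      -- prolongation identity on pairs from 𝔤₋₁ × 𝔤₋₂ (𝔤𝔩(U)-components),
      (∀ (u : U) (q : Q) (w w' : U) (t : U),
        (2⁻¹ * φ₁ (u ⊗ₜ[ℂ] q) t w) • w' + (2⁻¹ * φ₁ (u ⊗ₜ[ℂ] q) t w') • w
          = (2⁻¹ * ω (φ₂ (symPr U w w') t) q) • u) →
      -- prolongation identity on pairs from 𝔤₋₁ × 𝔤₋₂ (𝔰𝔭_ω(Q)-components),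
      (∀ (u : U) (q : Q) (w w' : U) (p : Q),
        (2⁻¹ * ω (φ₂ (symPr U w w') u) p) • q
            + (2⁻¹ * ω q p) • (φ₂ (symPr U w w') u) = 0) →
      φ₂ = 0 ∧ φ₁ = 0) ∧
    -- 𝔤₄ = 0 (given 𝔤₃ = 0) :
    (∀ ψ : SymSq U →ₗ[ℂ] (U →ₗ[ℂ] U →ₗ[ℂ] ℂ),
      (∀ (s : SymSq U) (u v : U), ψ s u v = ψ s v u) →
      (∀ (w w' : U) (u : U) (p : Q) (t : U),
        (ψ (symPr U w w') t u) • p = (0 : Q)) →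
      ψ = 0) := by
  obtain ⟨p, hp⟩ := DFunLike.ne_iff.1 hne
  have hp_ne : p ≠ 0 := fun h => hp (by simp [h])
  have htwo : (2⁻¹ : ℂ) ≠ 0 := by norm_num
  refine ⟨fun φ₂ φ₁ _ _ hgl hsp => ?_, fun ψ _ hψ => ?_⟩
  · have hφ₂ : φ₂ = 0 := SymSq.hom_ext fun w w' => LinearMap.ext fun u =>
      LinearMap.IsAlt.eq_zero_of_forall_smul_add_smul_eq_zero halt hne fun q p =>
        (mul_smul_add_mul_smul_eq_zero_iff htwo).1 (hsp u q w w' p)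
    refine ⟨hφ₂, TensorProduct.ext' fun u q => LinearMap.ext fun t =>
      LinearMap.eq_zero_of_forall_smul_add_smul_eq_zero fun w w' => ?_⟩
    refine (mul_smul_add_mul_smul_eq_zero_iff htwo).1 ?_
    simpa [hφ₂] using hgl u q w w' t
  · exact SymSq.hom_ext fun w w' => LinearMap.ext₂ fun t u =>
      (smul_eq_zero.1 (hψ w w' u p t)).resolve_right hp_ne
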